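/- arXiv:2107.08733 — 3 statements merged into one kernel-verified Lean document; each statement's English description precedes it below -/
import Mathlib

section
/- Let W^{(1)}, W^{(2)} be i.i.d. real random variables, let f : (0,∞) → [0,∞) and a symmetric measurable g : ℝ² → [0,∞) be given, and set κ(t,x,y) := min(1, f(t)·g(x,y)). Assume: (1) there exist α_p > 1 and t_1 > 0 such that f(t) ≤ t^{-α_p} for all t > t_1; (2) there exist β_p > 0 and t_2 > 0 such that P( g(W^{(1)}, W^{(2)}) > t ) ≤ t^{-β_p} for all t > t_2. Then for every ε > 0 there exists t_0 = t_0(ε) > 0 such that for all t > t_0: E[ κ(t, W^{(1)}, W^{(2)}) ] ≤ t^{-min(α_p, α_p β_p) + ε}. -/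
open MeasureTheory ProbabilityTheory Filter Topology
open scoped ENNReal NNReal

noncomputable section

/-- Euclidean space `ℝ^d`. -/
abbrev Euc (d : ℕ) : Type := EuclideanSpace ℝ (Fin d)

open Classical in
/-- Real-valued indicator of a proposition. -/
noncomputable def indic (p : Prop) : ℝ := if p then 1 else 0

/-- The box `I_n = [-n^{1/d}/2, n^{1/d}/2]^d`. -/
def boxIn (d n : ℕ) : Set (Euc d) :=
  {x | ∀ i, |x i| ≤ ((n : ℝ) ^ ((1 : ℝ) / d)) / 2}

/-- Uniform probability measure on the box `I_n` (which has Lebesgue measure `n`). -/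
noncomputable def unifBox (d n : ℕ) : Measure (Euc d) :=
  (n : ℝ≥0∞)⁻¹ • (volume.restrict (boxIn d n))

/-- Uniform probability measure on `[0,1]`. -/
noncomputable def unif01 : Measure ℝ := volume.restrict (Set.Icc 0 1)

/-- Uniform probability measure on the open Euclidean ball of radius `r` about the origin. -/
noncomputable def unifBall (d : ℕ) (r : ℝ) : Measure (Euc d) :=
  (volume (Metric.ball (0 : Euc d) r))⁻¹ • (volume.restrict (Metric.ball (0 : Euc d) r))

/-- The sequence of finite spatial inhomogeneous random graphs (SIRGs), on a probability
space `(Ω, P)`: for each `n`, vertex locations `Y n` are i.i.d. uniform on the box `I_n`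
(these are the blown-up locations `Y_i = n^{1/d} X_i` with `X_i` i.i.d. uniform on the unit
cube), `Wt n` is a random weight vector, `U n` is an array whose entries for `i < j` are
i.i.d. Uniform[0,1] variables, the three being mutually independent; `κn n` is a connection
function with values in `[0,1]` (for positive first argument), measurable and symmetric in
its last two arguments; `R n` is a pair of independent uniformly chosen vertices,
independent of everything else. -/
structure SIRGModel (d : ℕ) (Ω : Type) [MeasurableSpace Ω] where
  P : Measure Ω
  probP : IsProbabilityMeasure P
  Y : (n : ℕ) → Fin n → Ω → Euc d
  Wt : (n : ℕ) → Fin n → Ω → ℝ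
  U : (n : ℕ) → Fin n → Fin n → Ω → ℝ
  R : (n : ℕ) → 0 < n → Fin 2 → Ω → Fin n
  κn : ℕ → ℝ → ℝ → ℝ → ℝ
  Y_meas : ∀ n i, Measurable (Y n i)
  Wt_meas : ∀ n i, Measurable (Wt n i)
  U_meas : ∀ n i j, Measurable (U n i j)
  R_meas : ∀ n hn k, Measurable (R n hn k)
  κn_meas : ∀ n, Measurable (fun p : ℝ × ℝ × ℝ => κn n p.1 p.2.1 p.2.2)
  κn_nonneg : ∀ n t x y, 0 < t → 0 ≤ κn n t x y
  κn_le_one : ∀ n t x y, 0 < t → κn n t x y ≤ 1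
  κn_symm : ∀ n t x y, κn n t x y = κn n t y x
  joint_law : ∀ n : ℕ,
      Measure.map (fun ω =>
        ((fun i => Y n i ω), (fun i => Wt n i ω),
          (fun p : {p : Fin n × Fin n // p.1 < p.2} => U n p.1.1 p.1.2 ω))) P
        = (Measure.pi fun _ : Fin n => unifBox d n).prod
            ((Measure.map (fun ω i => Wt n i ω) P).prod
              (Measure.pi fun _ : {p : Fin n × Fin n // p.1 < p.2} => unif01))
  R_unif : ∀ n hn (i j : Fin n),
      P {ω | R n hn 0 ω = i ∧ R n hn 1 ω = j} = ((n : ℝ≥0∞) * n)⁻¹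
  R_indep : ∀ n hn,
      IndepFun (fun ω => (R n hn 0 ω, R n hn 1 ω))
        (fun ω => ((fun i => Y n i ω), (fun i => Wt n i ω), (fun i j => U n i j ω))) P

variable {d : ℕ} {Ω : Type} [MeasurableSpace Ω]

instance (M : SIRGModel d Ω) : IsProbabilityMeasure M.P := M.probP

/-- The random graph `𝔾_n`: for `i < j`, the edge `{i,j}` is present iff
`U_{ij} ≤ κ_n(‖Y_i - Y_j‖, W_i, W_j)`. -/
def SIRGModel.graph (M : SIRGModel d Ω) (n : ℕ) (ω : Ω) : SimpleGraph (Fin n) :=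
  SimpleGraph.fromRel (fun i j =>
    i < j ∧ M.U n i j ω ≤
      M.κn n (dist (M.Y n i ω) (M.Y n j ω)) (M.Wt n i ω) (M.Wt n j ω))

open Classical in
/-- Degree of a vertex in a finite simple graph. -/
noncomputable def degOf {V : Type*} [Fintype V] (G : SimpleGraph V) (v : V) : ℕ :=
  (Finset.univ.filter fun u => G.Adj v u).card

/-- Rooted isomorphism of rooted graphs. -/
def RootedIso {V₁ : Type*} {V₂ : Type*} (G₁ : SimpleGraph V₁) (r₁ : V₁)
    (G₂ : SimpleGraph V₂) (r₂ : V₂) : Prop :=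
  ∃ φ : G₁ ≃g G₂, φ r₁ = r₂

/-- The (vertex set of the) ball of radius `K` around `o` in the graph `G`:
all vertices reachable from `o` within graph distance `K`. -/
def graphBall {V : Type*} (G : SimpleGraph V) (o : V) (K : ℕ) : Set V :=
  {v | G.Reachable o v ∧ G.dist o v ≤ K}

/-- `ballIso G o K H h`: the subgraph of `G` induced by the `K`-ball around `o`, rooted at `o`,
is rooted-isomorphic to `(H, h)`. -/
def ballIso {V : Type*} (G : SimpleGraph V) (o : V) (K : ℕ)
    {V' : Type*} (H : SimpleGraph V') (h : V') : Prop :=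
  ∃ ho : o ∈ graphBall G o K, RootedIso (G.induce (graphBall G o K)) ⟨o, ho⟩ H h

/-- The set of vertices whose location lies within Euclidean distance `r` of the location
of vertex `i`. -/
def SIRGModel.euclSet (M : SIRGModel d Ω) (n : ℕ) (ω : Ω) (i : Fin n) (r : ℝ) :
    Set (Fin n) :=
  {j | dist (M.Y n j ω) (M.Y n i ω) < r}

/-- The Euclidean graph neighbourhood `F^{𝔾_n}_i(r)`: the subgraph of `𝔾_n` induced by the
vertices whose location is within distance `r` of the location of `i`. -/
def SIRGModel.euclNbhd (M : SIRGModel d Ω) (n : ℕ) (ω : Ω) (i : Fin n) (r : ℝ) :=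
  (M.graph n ω).induce (M.euclSet n ω i r)

/-- `F^{𝔾_n}_i(r)`, rooted at `i`, is rooted-isomorphic to `(H, h)`. -/
def SIRGModel.euclNbhdIso (M : SIRGModel d Ω) (n : ℕ) (ω : Ω) (i : Fin n) (r : ℝ)
    {V : Type*} (H : SimpleGraph V) (h : V) : Prop :=
  ∃ hi : i ∈ M.euclSet n ω i r, RootedIso (M.euclNbhd n ω i r) ⟨i, hi⟩ H h

/-- The set of vertices in the `K`-ball around `i` of the Euclidean neighbourhood graph
`F^{𝔾_n}_i(r)`, viewed as a subset of the vertex set of `𝔾_n`. -/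
def SIRGModel.spatialBall (M : SIRGModel d Ω) (n : ℕ) (ω : Ω) (i : Fin n) (r : ℝ)
    (K : ℕ) : Set (Fin n) :=
  {v | ∃ (hi : i ∈ M.euclSet n ω i r) (hv : v ∈ M.euclSet n ω i r),
      (⟨v, hv⟩ : M.euclSet n ω i r) ∈ graphBall (M.euclNbhd n ω i r) ⟨i, hi⟩ K}

/-- Empirical frequency of the rooted graph `(H,h)` among the Euclidean `r`-neighbourhoods
`F^{𝔾_n}_i(r)`, `i ∈ [n]`. -/
noncomputable def SIRGModel.empNbhdFreq (M : SIRGModel d Ω) (n : ℕ) (r : ℝ)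
    {V : Type*} (H : SimpleGraph V) (h : V) (ω : Ω) : ℝ :=
  (∑ i : Fin n, indic (M.euclNbhdIso n ω i r H h)) / n

/-- Empirical frequency of the rooted graph `(H,h)` among the rooted `K`-balls of `𝔾_n`. -/
noncomputable def SIRGModel.empBallFreq (M : SIRGModel d Ω) (n K : ℕ)
    {V : Type*} (H : SimpleGraph V) (h : V) (ω : Ω) : ℝ :=
  (∑ i : Fin n, indic (ballIso (M.graph n ω) i K H h)) / n

/-- Prepend the origin to a tuple of points. -/
def withZero {d l : ℕ} (z : Fin l → Euc d) : Fin (l + 1) → Euc d :=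
  Fin.cases 0 z

/-- The limiting graph on `l+1` vertices built from locations `0, z 0, …, z (l-1)`, weights `w`
and uniform variables `u`, with connection function `κ`. -/
def limitGraph (d : ℕ) (κ : ℝ → ℝ → ℝ → ℝ) (l : ℕ) (z : Fin l → Euc d)
    (w : Fin (l + 1) → ℝ) (u : Fin (l + 1) → Fin (l + 1) → ℝ) : SimpleGraph (Fin (l + 1)) :=
  SimpleGraph.fromRel (fun i j =>
    i < j ∧ u i j ≤ κ (dist (withZero z i) (withZero z j)) (w i) (w j))

/-- Poisson probability mass function with mean `lam`. -/
noncomputable def poissonWeight (lam : ℝ≥0∞) (k : ℕ) : ℝ≥0∞ :=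
  ENNReal.ofReal (Real.exp (-(lam.toReal)) * lam.toReal ^ k / (Nat.factorial k))

/-- The probability that the Poissonized limiting Euclidean `r`-neighbourhood `F_r`
(rooted at the vertex `0` located at the origin) is rooted-isomorphic to `(H,h)`:
the number `N` of non-root vertices is Poisson with mean `λ_d(B_r)`; given `N = l`, the
non-root locations are i.i.d. uniform on `B_r`, the `l+1` weights are i.i.d. with law `μW`,
and, given everything, edges are present independently with probabilities given by `κ`. -/
noncomputable def limitNbhdProb (d : ℕ) (κ : ℝ → ℝ → ℝ → ℝ) (μW : Measure ℝ) (r : ℝ)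
    {V : Type*} (H : SimpleGraph V) (h : V) : ℝ≥0∞ :=
  ∑' l : ℕ,
    poissonWeight (volume (Metric.ball (0 : Euc d) r)) l *
      ((Measure.pi fun _ : Fin l => unifBall d r).prod
          ((Measure.pi fun _ : Fin (l + 1) => μW).prod
            (Measure.pi fun _ : Fin (l + 1) => Measure.pi fun _ : Fin (l + 1) => unif01)))
        {zwu : (Fin l → Euc d) × (Fin (l + 1) → ℝ) × (Fin (l + 1) → Fin (l + 1) → ℝ) |
          RootedIso (limitGraph d κ l zwu.1 zwu.2.1 zwu.2.2) 0 H h}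

/-- The path expectation
`E[∏_{i=1}^{j} κ_n(‖x_i − x_{i-1}‖, W^{(n)}_{V_{i-1}}, W^{(n)}_{V_i})]`, where
`V_0, …, V_j` are i.i.d. uniform indices on `[n]`, independent of the weights `W^{(n)}`. -/
noncomputable def SIRGModel.pathExp (M : SIRGModel d Ω) (n j : ℕ)
    (x : Fin (j + 1) → Euc d) : ℝ :=
  ∫ ω, (∑ v : Fin (j + 1) → Fin n,
      ∏ i : Fin j,
        M.κn n (dist (x i.succ) (x i.castSucc)) (M.Wt n (v i.castSucc) ω)
          (M.Wt n (v i.succ) ω)) / (n : ℝ) ^ (j + 1) ∂M.P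

/-- `𝕎_j(x_0, …, x_j) = E[∏_{i=1}^{j} κ(‖x_i − x_{i-1}‖, W^{(i-1)}, W^{(i)})]` with
`W^{(0)}, …, W^{(j)}` i.i.d. with law `μW`. -/
noncomputable def Wfun (d : ℕ) (κ : ℝ → ℝ → ℝ → ℝ) (μW : Measure ℝ) (j : ℕ)
    (x : Fin (j + 1) → Euc d) : ℝ :=
  ∫ w : Fin (j + 1) → ℝ,
    ∏ i : Fin j, κ (dist (x i.succ) (x i.castSucc)) (w i.castSucc) (w i.succ)
    ∂(Measure.pi fun _ : Fin (j + 1) => μW)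

/-- The product of indicators
`∏_{i=1}^{j-1} 1{‖x_i − x_{i-1}‖ < a^{m^i}} · 1{‖x_j − x_{j-1}‖ > a^{m^j}}`. -/
noncomputable def pathIndic {d : ℕ} (j : ℕ) (a m : ℝ) (x : Fin (j + 1) → Euc d) : ℝ≥0∞ :=
  ∏ i : Fin j,
    if i.val + 1 < j then
      (if dist (x i.succ) (x i.castSucc) < a ^ (m ^ (i.val + 1)) then 1 else 0)
    else
      (if a ^ (m ^ j) < dist (x i.succ) (x i.castSucc) then 1 else 0)

/-- The indicator of `z_k ∈ B(a^{m^k})` for `1 ≤ k ≤ j-1` and `z_j ∉ B(a^{m^j})`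
(with `z` indexed by `Fin j`, so `z i` stands for `z_{i+1}`). -/
noncomputable def shellIndic {d : ℕ} (j : ℕ) (a m : ℝ) (z : Fin j → Euc d) : ℝ≥0∞ :=
  ∏ i : Fin j,
    if i.val + 1 < j then
      (if ‖z i‖ < a ^ (m ^ (i.val + 1)) then 1 else 0)
    else
      (if a ^ (m ^ j) ≤ ‖z i‖ then 1 else 0)

/-- The expectation `E[κ_n(t, W^{(n)}_{V_1}, W^{(n)}_{V_2})]`, where `V_1, V_2` are i.i.d.
uniform indices on `[n]`, independent of the weights. -/
noncomputable def SIRGModel.expKn (M : SIRGModel d Ω) (n : ℕ) (t : ℝ) : ℝ :=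
  ∫ ω, (∑ v : Fin n × Fin n, M.κn n t (M.Wt n v.1 ω) (M.Wt n v.2 ω)) / (n : ℝ) ^ 2 ∂M.P

/-- The radius `r(a, m, K) = a^m + a^{m^2} + ⋯ + a^{m^K}`. -/
noncomputable def rr (a m : ℝ) (K : ℕ) : ℝ :=
  ∑ k ∈ Finset.range K, a ^ (m ^ (k + 1))

/-- Assumptions (A1)–(A2): convergence in probability of the empirical weight distribution
to the law `μW` of the limiting weight (at every continuity point of its cdf), and
convergence of the connection functions `κn` to a limiting connection function `κ`. -/
structure SIRGWeakAssumptions {d : ℕ} {Ω : Type} [MeasurableSpace Ω] (M : SIRGModel d Ω) where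
  μW : Measure ℝ
  probμW : IsProbabilityMeasure μW
  weights_conv : ∀ x : ℝ, μW {x} = 0 →
    TendstoInMeasure M.P
      (fun n ω => (∑ i : Fin n, indic (M.Wt n i ω ≤ x)) / n) atTop
      (fun _ => (μW (Set.Iic x)).toReal)
  κ : ℝ → ℝ → ℝ → ℝ
  κ_meas : Measurable fun p : ℝ × ℝ × ℝ => κ p.1 p.2.1 p.2.2
  κ_nonneg : ∀ t x y, 0 < t → 0 ≤ κ t x y
  κ_le_one : ∀ t x y, 0 < t → κ t x y ≤ 1
  κ_symm : ∀ t x y, κ t x y = κ t y x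
  κ_conv : ∀ (x y : ℝ) (xs ys : ℕ → ℝ),
      Tendsto xs atTop (𝓝 x) → Tendsto ys atTop (𝓝 y) →
      ∀ᵐ t ∂(volume : Measure ℝ), 0 < t →
        Tendsto (fun n => M.κn n t (xs n) (ys n)) atTop (𝓝 (κ t x y))

/-- Assumptions (A1)–(A3): additionally, the polynomial tail bound
`E[κ(t, W^{(1)}, W^{(2)})] ≤ t^{-α}` with `α > d`, for all `t > t₀`. -/
structure SIRGAssumptions {d : ℕ} {Ω : Type} [MeasurableSpace Ω] (M : SIRGModel d Ω)
    extends SIRGWeakAssumptions M where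
  t₀ : ℝ
  α : ℝ
  t₀_pos : 0 < t₀
  α_gt_dim : (d : ℝ) < α
  κ_tail : ∀ t : ℝ, t₀ < t →
      ∫ p : ℝ × ℝ, κ t p.1 p.2 ∂(μW.prod μW) ≤ t ^ (-α)


/-- Lemma: bound on product kernels.
Let `W¹, W²` be i.i.d. with law `μ`, let `f : (0,∞) → [0,∞)` and `g : ℝ² → [0,∞)` symmetric
measurable, and put `κ(t,x,y) = min(1, f(t)g(x,y))`. If `f(t) ≤ t^{-α_p}` for `t > t₁` with
`α_p > 1`, and `P(g(W¹,W²) > t) ≤ t^{-β_p}` for `t > t₂` with `β_p > 0`, then for every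
`ε > 0` there is `t₀ > 0` such that `E[κ(t, W¹, W²)] ≤ t^{-min(α_p, α_p β_p) + ε}` for
all `t > t₀`. -/
theorem stmt8 (μ : Measure ℝ) (hμ : IsProbabilityMeasure μ)
    (f : ℝ → ℝ) (g : ℝ → ℝ → ℝ)
    (hf_nonneg : ∀ t : ℝ, 0 < t → 0 ≤ f t)
    (hg_nonneg : ∀ x y : ℝ, 0 ≤ g x y)
    (hg_symm : ∀ x y : ℝ, g x y = g y x)
    (hg_meas : Measurable fun p : ℝ × ℝ => g p.1 p.2)
    (αp : ℝ) (hαp : 1 < αp) (t₁ : ℝ) (ht₁ : 0 < t₁)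
    (hf_bound : ∀ t : ℝ, t₁ < t → f t ≤ t ^ (-αp))
    (βp : ℝ) (hβp : 0 < βp) (t₂ : ℝ) (ht₂ : 0 < t₂)
    (hg_tail : ∀ t : ℝ, t₂ < t →
      (μ.prod μ) {p : ℝ × ℝ | t < g p.1 p.2} ≤ ENNReal.ofReal (t ^ (-βp)))
    (ε : ℝ) (hε : 0 < ε) :
    ∃ t₀ : ℝ, 0 < t₀ ∧ ∀ t : ℝ, t₀ < t →
      ∫ p : ℝ × ℝ, min 1 (f t * g p.1 p.2) ∂(μ.prod μ) ≤ t ^ (-(min αp (αp * βp)) + ε) := by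
  haveI := hμ
  haveI : IsProbabilityMeasure (μ.prod μ) := by infer_instance
  set ν := μ.prod μ with hνdef
  have hαp0 : (0:ℝ) < αp := lt_trans one_pos hαp
  have hmin_pos : 0 < min βp 1 := lt_min hβp one_pos
  set δ : ℝ := min (ε / (2 * αp)) (min βp 1 / 2) with hδdef
  have hδ_pos : 0 < δ := lt_min (by positivity) (by positivity)
  have hδ_le : δ ≤ ε / (2 * αp) := min_le_left _ _
  have hδ_le' : δ ≤ min βp 1 / 2 := min_le_right _ _
  set θ : ℝ := min βp 1 - δ with hθdef
  have hθ_pos : 0 < θ := by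
    have := hδ_le'
    simp only [hθdef]; linarith
  have hθ_lt : θ < min βp 1 := by simp only [hθdef]; linarith
  have hθ_lt_βp : θ < βp := lt_of_lt_of_le hθ_lt (min_le_left _ _)
  have hθ_le_one : θ ≤ 1 := le_trans hθ_lt.le (min_le_right _ _)
  set m : ℝ := min αp (αp * βp) with hmdef
  have hm : m = αp * min βp 1 := by
    rcases le_total βp 1 with h | h
    · rw [min_eq_left h, hmdef, min_eq_right (by nlinarith : αp * βp ≤ αp)]
    · rw [min_eq_right h, mul_one, hmdef, min_eq_left (by nlinarith : αp ≤ αp * βp)]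
  have hαpθ : m - ε / 2 ≤ αp * θ := by
    have h2 : αp * (ε / (2 * αp)) = ε / 2 := by
      field_simp
    have h1 : αp * δ ≤ ε / 2 := by
      rw [← h2]; exact mul_le_mul_of_nonneg_left hδ_le hαp0.le
    have : αp * θ = αp * min βp 1 - αp * δ := by rw [hθdef]; ring
    rw [this, ← hm]; linarith
  -- the moment integral
  have hGθ_meas : Measurable fun p : ℝ × ℝ => g p.1 p.2 ^ θ := by fun_prop
  have layer :
      ∫⁻ p, ENNReal.ofReal (g p.1 p.2 ^ θ) ∂ν
        = ENNReal.ofReal θ *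
            ∫⁻ t in Set.Ioi (0:ℝ),
              ν {a : ℝ × ℝ | t < g a.1 a.2} * ENNReal.ofReal (t ^ (θ - 1)) :=
    lintegral_rpow_eq_lintegral_meas_lt_mul ν
      (ae_of_all _ fun p => hg_nonneg p.1 p.2) hg_meas.aemeasurable hθ_pos
  set T : ℝ := max t₂ 1 with hTdef
  have hT_pos : (0:ℝ) < T := lt_of_lt_of_le one_pos (le_max_right _ _)
  have hK : (∫⁻ t in Set.Ioi (0:ℝ),
      ν {a : ℝ × ℝ | t < g a.1 a.2} * ENNReal.ofReal (t ^ (θ - 1))) ≠ ∞ := by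
    have hsplit : Set.Ioi (0:ℝ) = Set.Ioc 0 T ∪ Set.Ioi T :=
      (Set.Ioc_union_Ioi_eq_Ioi hT_pos.le).symm
    rw [hsplit, lintegral_union measurableSet_Ioi Set.Ioc_disjoint_Ioi_same]
    refine ENNReal.add_ne_top.mpr ⟨?_, ?_⟩
    · -- near zero
      have hb : (∫⁻ t in Set.Ioc (0:ℝ) T,
          ν {a : ℝ × ℝ | t < g a.1 a.2} * ENNReal.ofReal (t ^ (θ - 1)))
          ≤ ∫⁻ t in Set.Ioc (0:ℝ) T, ENNReal.ofReal (t ^ (θ - 1)) := by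
        refine lintegral_mono fun t => ?_
        calc ν {a : ℝ × ℝ | t < g a.1 a.2} * ENNReal.ofReal (t ^ (θ - 1))
            ≤ 1 * ENNReal.ofReal (t ^ (θ - 1)) :=
              mul_le_mul_left prob_le_one _
          _ = ENNReal.ofReal (t ^ (θ - 1)) := one_mul _
      have hint : IntegrableOn (fun t : ℝ => t ^ (θ - 1)) (Set.Ioc 0 T) := by
        rw [← intervalIntegrable_iff_integrableOn_Ioc_of_le hT_pos.le]
        exact intervalIntegral.intervalIntegrable_rpow' (by linarith)
      have heq : (∫⁻ t in Set.Ioc (0:ℝ) T, ENNReal.ofReal (t ^ (θ - 1)))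
          = ENNReal.ofReal (∫ t in Set.Ioc (0:ℝ) T, t ^ (θ - 1)) := by
        rw [← ofReal_integral_eq_lintegral_ofReal hint]
        filter_upwards [self_mem_ae_restrict (measurableSet_Ioc :
          MeasurableSet (Set.Ioc (0:ℝ) T))] with t ht
        exact Real.rpow_nonneg ht.1.le _
      exact ne_top_of_le_ne_top (by rw [heq]; exact ENNReal.ofReal_ne_top) hb
    · -- tail
      have hb : (∫⁻ t in Set.Ioi T,
          ν {a : ℝ × ℝ | t < g a.1 a.2} * ENNReal.ofReal (t ^ (θ - 1)))
          ≤ ∫⁻ t in Set.Ioi T, ENNReal.ofReal (t ^ (θ - 1 - βp)) := by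
        refine lintegral_mono_ae ?_
        filter_upwards [self_mem_ae_restrict (measurableSet_Ioi :
          MeasurableSet (Set.Ioi T))] with t ht
        have ht2 : t₂ < t := lt_of_le_of_lt (le_max_left _ _) ht
        have ht0 : (0:ℝ) < t := lt_trans hT_pos ht
        calc ν {a : ℝ × ℝ | t < g a.1 a.2} * ENNReal.ofReal (t ^ (θ - 1))
            ≤ ENNReal.ofReal (t ^ (-βp)) * ENNReal.ofReal (t ^ (θ - 1)) :=
              mul_le_mul_left (hg_tail t ht2) _
          _ = ENNReal.ofReal (t ^ (-βp) * t ^ (θ - 1)) :=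
              (ENNReal.ofReal_mul (Real.rpow_nonneg ht0.le _)).symm
          _ = ENNReal.ofReal (t ^ (θ - 1 - βp)) := by
              rw [← Real.rpow_add ht0]; ring_nf
      have hint : IntegrableOn (fun t : ℝ => t ^ (θ - 1 - βp)) (Set.Ioi T) :=
        integrableOn_Ioi_rpow_of_lt (by linarith) hT_pos
      have heq : (∫⁻ t in Set.Ioi T, ENNReal.ofReal (t ^ (θ - 1 - βp)))
          = ENNReal.ofReal (∫ t in Set.Ioi T, t ^ (θ - 1 - βp)) := by
        rw [← ofReal_integral_eq_lintegral_ofReal hint]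
        filter_upwards [self_mem_ae_restrict (measurableSet_Ioi :
          MeasurableSet (Set.Ioi T))] with t ht
        exact Real.rpow_nonneg (lt_trans hT_pos ht).le _
      exact ne_top_of_le_ne_top (by rw [heq]; exact ENNReal.ofReal_ne_top) hb
  have hJ : (∫⁻ p, ENNReal.ofReal (g p.1 p.2 ^ θ) ∂ν) ≠ ∞ := by
    rw [layer]
    exact ENNReal.mul_ne_top ENNReal.ofReal_ne_top hK
  have hIntGθ : Integrable (fun p : ℝ × ℝ => g p.1 p.2 ^ θ) ν := by
    refine ⟨hGθ_meas.aestronglyMeasurable, ?_⟩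
    rw [hasFiniteIntegral_iff_ofReal (ae_of_all _ fun p => Real.rpow_nonneg (hg_nonneg _ _) _)]
    exact lt_top_iff_ne_top.mpr hJ
  set C : ℝ := ∫ p, g p.1 p.2 ^ θ ∂ν with hCdef
  have hC_nn : 0 ≤ C :=
    integral_nonneg fun p => Real.rpow_nonneg (hg_nonneg _ _) _
  set e : ℝ := αp * θ - m + ε with hedef
  have he_pos : 0 < e := by
    have : ε / 2 ≤ e := by simp only [hedef]; linarith
    linarith
  refine ⟨max (max t₁ 1) (C ^ e⁻¹), lt_of_lt_of_le one_pos
    (le_trans (le_max_right t₁ 1) (le_max_left _ _)), fun t ht => ?_⟩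
  have ht1 : t₁ < t := lt_of_le_of_lt (le_trans (le_max_left t₁ 1) (le_max_left _ _)) ht
  have ht_one : (1:ℝ) < t := lt_of_le_of_lt (le_trans (le_max_right t₁ 1) (le_max_left _ _)) ht
  have ht_pos : (0:ℝ) < t := lt_trans one_pos ht_one
  have htC : C ^ e⁻¹ < t := lt_of_le_of_lt (le_max_right _ _) ht
  have hft : 0 ≤ f t := hf_nonneg t ht_pos
  -- pointwise bound and integral comparison
  have hpt : ∀ p : ℝ × ℝ, min 1 (f t * g p.1 p.2) ≤ f t ^ θ * g p.1 p.2 ^ θ := by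
    intro p
    have hx : 0 ≤ f t * g p.1 p.2 := mul_nonneg hft (hg_nonneg _ _)
    have h1 : min 1 (f t * g p.1 p.2) ≤ (f t * g p.1 p.2) ^ θ := by
      rcases le_or_gt 1 (f t * g p.1 p.2) with h | h
      · rw [min_eq_left h]
        exact Real.one_le_rpow h hθ_pos.le
      · rw [min_eq_right h.le]
        rcases eq_or_lt_of_le hx with h0 | h0
        · rw [← h0, Real.zero_rpow hθ_pos.ne']
        · calc f t * g p.1 p.2 = (f t * g p.1 p.2) ^ (1:ℝ) := (Real.rpow_one _).symm
            _ ≤ (f t * g p.1 p.2) ^ θ :=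
              Real.rpow_le_rpow_of_exponent_ge h0 h.le hθ_le_one
    rwa [Real.mul_rpow hft (hg_nonneg _ _)] at h1
  have hIntMin : Integrable (fun p : ℝ × ℝ => min 1 (f t * g p.1 p.2)) ν := by
    refine Integrable.mono (integrable_const (1:ℝ)) ?_ (ae_of_all _ fun p => ?_)
    · exact (measurable_const.min (measurable_const.mul hg_meas)).aestronglyMeasurable
    · have hx : 0 ≤ f t * g p.1 p.2 := mul_nonneg hft (hg_nonneg _ _)
      rw [Real.norm_eq_abs, norm_one, abs_of_nonneg (le_min zero_le_one hx)]
      exact min_le_left _ _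
  have step1 : ∫ p, min 1 (f t * g p.1 p.2) ∂ν ≤ ∫ p, f t ^ θ * g p.1 p.2 ^ θ ∂ν :=
    integral_mono hIntMin (hIntGθ.const_mul _) hpt
  have step2 : ∫ p, f t ^ θ * g p.1 p.2 ^ θ ∂ν = f t ^ θ * C := integral_const_mul _ _
  have step3 : f t ^ θ * C ≤ t ^ (-(αp * θ)) * C := by
    refine mul_le_mul_of_nonneg_right ?_ hC_nn
    calc f t ^ θ ≤ (t ^ (-αp)) ^ θ :=
          Real.rpow_le_rpow hft (hf_bound t ht1) hθ_pos.le
      _ = t ^ (-(αp * θ)) := by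
          rw [← Real.rpow_mul ht_pos.le, neg_mul]
  have hCle : C ≤ t ^ e := by
    calc C = (C ^ e⁻¹) ^ e := (Real.rpow_inv_rpow hC_nn he_pos.ne').symm
      _ ≤ t ^ e := Real.rpow_le_rpow (Real.rpow_nonneg hC_nn _) htC.le he_pos.le
  have step4 : t ^ (-(αp * θ)) * C ≤ t ^ (-m + ε) := by
    calc t ^ (-(αp * θ)) * C ≤ t ^ (-(αp * θ)) * t ^ e :=
          mul_le_mul_of_nonneg_left hCle (Real.rpow_nonneg ht_pos.le _)
      _ = t ^ (-(αp * θ) + e) := (Real.rpow_add ht_pos _ _).symm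
      _ = t ^ (-m + ε) := by rw [hedef]; ring_nf
  calc ∫ p, min 1 (f t * g p.1 p.2) ∂ν ≤ f t ^ θ * C := by rw [← step2]; exact step1
    _ ≤ t ^ (-(αp * θ)) * C := step3
    _ ≤ t ^ (-m + ε) := step4

end
end

section
/- Let λ > 0, α > 0, β > 0, and let W^{(1)}, W^{(2)} be i.i.d. Pareto random variables with P(W^{(i)} > w) = w^{-β} for all w ≥ 1. Define κ(t,x,y) := 1 − exp(−λ x y / t^{α}) for t > 0. Then for every ε > 0 there exists t_0 > 0 such that for all t > t_0: E[ κ(t, W^{(1)}, W^{(2)}) ] ≤ t^{-min(α, αβ) + ε}. -/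
open MeasureTheory ProbabilityTheory Filter Topology
open scoped ENNReal NNReal

noncomputable section

variable {d : ℕ} {Ω : Type} [MeasurableSpace Ω]

open Set

/-- `1 - exp(-u) ≤ u ^ γ` for `u ≥ 0`, `0 < γ ≤ 1`. -/
lemma aux_one_sub_exp_le_rpow {γ u : ℝ} (hγ0 : 0 < γ) (hγ1 : γ ≤ 1) (hu : 0 ≤ u) :
    1 - Real.exp (-u) ≤ u ^ γ := by
  rcases le_or_gt u 1 with h | h
  · have h1 : 1 - Real.exp (-u) ≤ u := by linarith [Real.add_one_le_exp (-u)]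
    rcases eq_or_lt_of_le hu with h0 | h0
    · simp [← h0, Real.zero_rpow hγ0.ne']
    · calc 1 - Real.exp (-u) ≤ u := h1
        _ = u ^ (1:ℝ) := (Real.rpow_one u).symm
        _ ≤ u ^ γ := Real.rpow_le_rpow_of_exponent_ge h0 h hγ1
  · calc 1 - Real.exp (-u) ≤ 1 := by linarith [Real.exp_pos (-u)]
      _ ≤ u ^ γ := Real.one_le_rpow h.le hγ0.le

/-- Moment bound for Pareto tail. -/
lemma aux_moment {β γ : ℝ} (hβ : 0 < β) (hγ0 : 0 < γ) (hγβ : γ < β)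
    (μ : Measure ℝ) (hμ : IsProbabilityMeasure μ)
    (hpareto : ∀ w : ℝ, 1 ≤ w → μ (Set.Ioi w) = ENNReal.ofReal (w ^ (-β)))
    (hae : ∀ᵐ w ∂μ, 1 < w) :
    ∫⁻ w, ENNReal.ofReal (w ^ γ) ∂μ ≤ ENNReal.ofReal (1 + 1 / (β / γ - 1)) := by
  have hmble : Measurable fun w : ℝ => w ^ γ := (Real.continuous_rpow_const hγ0.le).measurable
  have hnn : 0 ≤ᵐ[μ] fun w : ℝ => w ^ γ := by
    filter_upwards [hae] with w hw
    exact Real.rpow_nonneg (by linarith) _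
  rw [lintegral_eq_lintegral_meas_lt μ hnn hmble.aemeasurable]
  have hsplit : Set.Ioi (0:ℝ) = Set.Ioc 0 1 ∪ Set.Ioi 1 := (Set.Ioc_union_Ioi_eq_Ioi zero_le_one).symm
  rw [hsplit, lintegral_union measurableSet_Ioi (Set.Ioc_disjoint_Ioi le_rfl)]
  have hβγ : 1 < β / γ := (one_lt_div hγ0).2 hγβ
  have h1 : ∫⁻ t in Set.Ioc (0:ℝ) 1, μ {a | t < a ^ γ} ≤ 1 := by
    calc ∫⁻ t in Set.Ioc (0:ℝ) 1, μ {a | t < a ^ γ}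
        ≤ ∫⁻ _t in Set.Ioc (0:ℝ) 1, 1 := lintegral_mono fun t => prob_le_one
      _ = 1 := by simp [Real.volume_Ioc]
  have h2 : ∫⁻ t in Set.Ioi (1:ℝ), μ {a | t < a ^ γ}
      ≤ ENNReal.ofReal (1 / (β / γ - 1)) := by
    have hpt : ∀ t ∈ Set.Ioi (1:ℝ), μ {a | t < a ^ γ} ≤ ENNReal.ofReal (t ^ (-(β/γ))) := by
      intro t ht
      rw [Set.mem_Ioi] at ht
      have ht0 : (0:ℝ) < t := by linarith
      have hsub : {a : ℝ | t < a ^ γ} ⊆ Set.Iic 1 ∪ Set.Ioi (t ^ (1/γ)) := by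
        intro a ha
        rcases le_or_gt a 1 with h | h
        · exact Or.inl h
        · refine Or.inr ?_
          have ha0 : (0:ℝ) < a := by linarith
          have : t ^ (1/γ) < (a ^ γ) ^ (1/γ) :=
            Real.rpow_lt_rpow ht0.le ha (by positivity)
          rwa [← Real.rpow_mul ha0.le, mul_one_div, div_self hγ0.ne', Real.rpow_one] at this
      have hIic : μ (Set.Iic 1) = 0 := by
        rw [← compl_Ioi, measure_compl measurableSet_Ioi (measure_ne_top μ _),
          hpareto 1 le_rfl]
        simp
      have htγ : (1:ℝ) ≤ t ^ (1/γ) := Real.one_le_rpow ht.le (by positivity)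
      calc μ {a : ℝ | t < a ^ γ} ≤ μ (Set.Iic 1 ∪ Set.Ioi (t ^ (1/γ))) := measure_mono hsub
        _ ≤ μ (Set.Iic 1) + μ (Set.Ioi (t ^ (1/γ))) := measure_union_le _ _
        _ = ENNReal.ofReal ((t ^ (1/γ)) ^ (-β)) := by rw [hIic, hpareto _ htγ, zero_add]
        _ = ENNReal.ofReal (t ^ (-(β/γ))) := by
            rw [← Real.rpow_mul ht0.le]
            ring_nf
    calc ∫⁻ t in Set.Ioi (1:ℝ), μ {a | t < a ^ γ}
        ≤ ∫⁻ t in Set.Ioi (1:ℝ), ENNReal.ofReal (t ^ (-(β/γ))) :=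
          setLIntegral_mono (by measurability) hpt
      _ = ENNReal.ofReal (∫ t in Set.Ioi (1:ℝ), t ^ (-(β/γ))) := by
          rw [← ofReal_integral_eq_lintegral_ofReal
            (integrableOn_Ioi_rpow_of_lt (by linarith) one_pos)
            ((ae_restrict_iff' measurableSet_Ioi).2 (ae_of_all _ fun t ht =>
              Real.rpow_nonneg (by linarith [Set.mem_Ioi.mp ht]) _))]
      _ = ENNReal.ofReal (1 / (β / γ - 1)) := by
          rw [integral_Ioi_rpow_of_lt (by linarith) one_pos]
          rw [Real.one_rpow]
          congr 1
          rw [show -(β/γ) + 1 = -(β/γ - 1) by ring, neg_div_neg_eq, one_div]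
  calc _ ≤ 1 + ENNReal.ofReal (1 / (β / γ - 1)) := add_le_add h1 h2
    _ = ENNReal.ofReal (1 + 1 / (β / γ - 1)) := by
        rw [ENNReal.ofReal_add zero_le_one (le_of_lt (div_pos one_pos (by linarith)))]
        simp


/-- Tail bound for the continuum scale-free percolation kernel.
Let `W¹, W²` be i.i.d. Pareto with `P(W > w) = w^{-β}` for `w ≥ 1`, and let
`κ(t,x,y) = 1 − exp(−λxy/t^α)`. Then for every `ε > 0` there is `t₀ > 0` such that
`E[κ(t, W¹, W²)] ≤ t^{-min(α, αβ) + ε}` for all `t > t₀`. -/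
theorem stmt16 (lam α β : ℝ) (hlam : 0 < lam) (hα : 0 < α) (hβ : 0 < β)
    (μ : Measure ℝ) (hμ : IsProbabilityMeasure μ)
    (hpareto : ∀ w : ℝ, 1 ≤ w → μ (Set.Ioi w) = ENNReal.ofReal (w ^ (-β)))
    (ε : ℝ) (hε : 0 < ε) :
    ∃ t₀ : ℝ, 0 < t₀ ∧ ∀ t : ℝ, t₀ < t →
      ∫ p : ℝ × ℝ, (1 - Real.exp (-(lam * p.1 * p.2 / t ^ α))) ∂(μ.prod μ)
        ≤ t ^ (-(min α (α * β)) + ε) := by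
  haveI := hμ
  set m := min 1 β with hm
  have hm0 : 0 < m := lt_min one_pos hβ
  have hm1 : m ≤ 1 := min_le_left _ _
  set γ := max (m / 2) (m - ε / (2 * α)) with hγdef
  have hγ0 : 0 < γ := lt_of_lt_of_le (half_pos hm0) (le_max_left _ _)
  have hε2α : 0 < ε / (2 * α) := by positivity
  have hγm : γ < m := max_lt (by linarith) (by linarith)
  have hγ1 : γ ≤ 1 := le_trans hγm.le hm1
  have hγβ : γ < β := lt_of_lt_of_le hγm (min_le_right _ _)
  have hαm : α * m = min α (α * β) := by
    rw [hm, mul_min_of_nonneg _ _ hα.le, mul_one]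
  have hαγ : min α (α * β) - ε / 2 ≤ α * γ := by
    have h2 : m - ε / (2 * α) ≤ γ := le_max_right _ _
    have h3 : α * (m - ε / (2 * α)) ≤ α * γ := by nlinarith
    have h4 : α * (ε / (2 * α)) = ε / 2 := by field_simp
    nlinarith
  have hβγ1 : 1 < β / γ := (one_lt_div hγ0).2 hγβ
  set A : ℝ := 1 + 1 / (β / γ - 1) with hAdef
  have hA1 : 1 ≤ A := by
    have : 0 ≤ 1 / (β / γ - 1) := le_of_lt (div_pos one_pos (by linarith))
    rw [hAdef]; linarith
  have hA0 : 0 < A := by linarith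
  set C' : ℝ := lam ^ γ * (A * A) with hC'def
  have hC'0 : 0 < C' := by positivity
  set t₀ : ℝ := (max 1 C') ^ (2 / ε) with ht₀def
  have ht₀1 : 1 ≤ t₀ := Real.one_le_rpow (le_max_left _ _) (by positivity)
  refine ⟨t₀, by linarith, fun t ht => ?_⟩
  have ht1 : 1 < t := lt_of_le_of_lt ht₀1 ht
  have ht0 : 0 < t := by linarith
  have hIic : μ (Set.Iic 1) = 0 := by
    rw [← Set.compl_Ioi, measure_compl measurableSet_Ioi (measure_ne_top μ _),
      hpareto 1 le_rfl]
    simp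
  have haeμ : ∀ᵐ w ∂μ, 1 < w := by
    rw [ae_iff]
    simpa only [not_lt] using (show μ {a | a ≤ 1} = 0 from hIic)
  have haeν : ∀ᵐ p ∂(μ.prod μ), 1 < p.1 ∧ 1 < p.2 := by
    have h1 : (μ.prod μ) (Set.Iic 1 ×ˢ Set.univ) = 0 := by
      rw [Measure.prod_prod, hIic, zero_mul]
    have h2 : (μ.prod μ) (Set.univ ×ˢ Set.Iic 1) = 0 := by
      rw [Measure.prod_prod, hIic, mul_zero]
    rw [ae_iff]
    refine measure_mono_null ?_ (measure_union_null h1 h2)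
    intro p hp
    simp only [Set.mem_setOf_eq, not_and_or, not_lt] at hp
    rcases hp with h | h
    · exact Or.inl ⟨h, trivial⟩
    · exact Or.inr ⟨trivial, h⟩
  set c : ℝ := lam ^ γ * t ^ (-(α * γ)) with hcdef
  have hc0 : 0 ≤ c := by positivity
  have hpt : ∀ᵐ p ∂(μ.prod μ),
      ENNReal.ofReal (1 - Real.exp (-(lam * p.1 * p.2 / t ^ α)))
        ≤ ENNReal.ofReal c * (ENNReal.ofReal (p.1 ^ γ) * ENNReal.ofReal (p.2 ^ γ)) := by
    filter_upwards [haeν] with p hp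
    obtain ⟨hx, hy⟩ := hp
    have hx0 : (0:ℝ) < p.1 := by linarith
    have hy0 : (0:ℝ) < p.2 := by linarith
    have htα : (0:ℝ) < t ^ α := Real.rpow_pos_of_pos ht0 α
    have hu : 0 ≤ lam * p.1 * p.2 / t ^ α := by positivity
    have hb := aux_one_sub_exp_le_rpow hγ0 hγ1 hu
    have heq : (lam * p.1 * p.2 / t ^ α) ^ γ = c * (p.1 ^ γ * p.2 ^ γ) := by
      rw [show lam * p.1 * p.2 / t ^ α = lam / t ^ α * p.1 * p.2 by ring,
        Real.mul_rpow (by positivity) hy0.le,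
        Real.mul_rpow (by positivity) hx0.le,
        Real.div_rpow hlam.le htα.le, ← Real.rpow_mul ht0.le,
        hcdef, Real.rpow_neg ht0.le, div_eq_mul_inv]
      ring
    calc ENNReal.ofReal (1 - Real.exp (-(lam * p.1 * p.2 / t ^ α)))
        ≤ ENNReal.ofReal ((lam * p.1 * p.2 / t ^ α) ^ γ) := ENNReal.ofReal_le_ofReal hb
      _ = _ := by
          rw [heq, ENNReal.ofReal_mul hc0,
            ENNReal.ofReal_mul (Real.rpow_nonneg hx0.le _)]
  have hfm : AEStronglyMeasurable
      (fun p : ℝ × ℝ => 1 - Real.exp (-(lam * p.1 * p.2 / t ^ α))) (μ.prod μ) := by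
    apply Continuous.aestronglyMeasurable
    fun_prop
  have hfnn : 0 ≤ᵐ[μ.prod μ]
      fun p : ℝ × ℝ => 1 - Real.exp (-(lam * p.1 * p.2 / t ^ α)) := by
    filter_upwards [haeν] with p hp
    obtain ⟨hx, hy⟩ := hp
    have htα : (0:ℝ) < t ^ α := Real.rpow_pos_of_pos ht0 α
    have hu : 0 ≤ lam * p.1 * p.2 / t ^ α := by positivity
    have h := Real.exp_le_exp.2 (neg_nonpos.2 hu)
    rw [Real.exp_zero] at h
    simp only [Pi.zero_apply]
    linarith
  rw [integral_eq_lintegral_of_nonneg_ae hfnn hfm]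
  have hwm : AEMeasurable (fun w : ℝ => ENNReal.ofReal (w ^ γ)) μ :=
    (ENNReal.measurable_ofReal.comp
      (Real.continuous_rpow_const hγ0.le).measurable).aemeasurable
  have hM := aux_moment hβ hγ0 hγβ μ hμ hpareto haeμ
  have hlin : ∫⁻ p : ℝ × ℝ,
      ENNReal.ofReal (1 - Real.exp (-(lam * p.1 * p.2 / t ^ α))) ∂(μ.prod μ)
      ≤ ENNReal.ofReal (c * (A * A)) := by
    calc ∫⁻ p : ℝ × ℝ,
        ENNReal.ofReal (1 - Real.exp (-(lam * p.1 * p.2 / t ^ α))) ∂(μ.prod μ)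
        ≤ ∫⁻ p : ℝ × ℝ, ENNReal.ofReal c *
            (ENNReal.ofReal (p.1 ^ γ) * ENNReal.ofReal (p.2 ^ γ)) ∂(μ.prod μ) :=
          lintegral_mono_ae hpt
      _ = ENNReal.ofReal c *
            ((∫⁻ w, ENNReal.ofReal (w ^ γ) ∂μ) * (∫⁻ w, ENNReal.ofReal (w ^ γ) ∂μ)) := by
          rw [lintegral_const_mul' _ _ ENNReal.ofReal_ne_top,
            lintegral_prod_mul hwm hwm]
      _ ≤ ENNReal.ofReal c * (ENNReal.ofReal A * ENNReal.ofReal A) := by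
          exact mul_le_mul' le_rfl (mul_le_mul' hM hM)
      _ = ENNReal.ofReal (c * (A * A)) := by
          rw [← ENNReal.ofReal_mul hA0.le, ← ENNReal.ofReal_mul hc0]
  have hC'le : C' ≤ t ^ (α * γ - min α (α * β) + ε) := by
    have h2 : max 1 C' = t₀ ^ (ε / 2) := by
      rw [ht₀def, ← Real.rpow_mul (le_trans zero_le_one (le_max_left _ _)),
        show 2 / ε * (ε / 2) = 1 by field_simp, Real.rpow_one]
    have h3 : t₀ ^ (ε / 2) ≤ t ^ (ε / 2) :=
      Real.rpow_le_rpow (by linarith) ht.le (by positivity)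
    have h4 : t ^ (ε / 2) ≤ t ^ (α * γ - min α (α * β) + ε) :=
      Real.rpow_le_rpow_of_exponent_le ht1.le (by linarith)
    calc C' ≤ max 1 C' := le_max_right _ _
      _ = t₀ ^ (ε / 2) := h2
      _ ≤ t ^ (ε / 2) := h3
      _ ≤ _ := h4
  calc (∫⁻ p : ℝ × ℝ,
      ENNReal.ofReal (1 - Real.exp (-(lam * p.1 * p.2 / t ^ α))) ∂(μ.prod μ)).toReal
      ≤ (ENNReal.ofReal (c * (A * A))).toReal :=
        ENNReal.toReal_mono ENNReal.ofReal_ne_top hlin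
    _ = c * (A * A) := ENNReal.toReal_ofReal (by positivity)
    _ = C' * t ^ (-(α * γ)) := by rw [hcdef, hC'def]; ring
    _ ≤ t ^ (α * γ - min α (α * β) + ε) * t ^ (-(α * γ)) :=
        mul_le_mul_of_nonneg_right hC'le (Real.rpow_nonneg ht0.le _)
    _ = t ^ (-(min α (α * β)) + ε) := by
        rw [← Real.rpow_add ht0]
        ring_nf

end
end

section
/- Let d ≥ 1 be an integer and α_G ∈ (1,∞), β_G > 2. Let W be a nonnegative random variable with finite positive mean E[W] and with a power-law tail of exponent β_G: there exist constants 0 < c_G ≤ C_G and t_G > 0 such that c_G z^{1-β_G} ≤ P(W > z) ≤ C_G z^{1-β_G} for all z > t_G. Define the limiting GIRG connection function κ(t,x,y) := min(1, (x y / E[W])^{α_G} · t^{-d α_G}) for t > 0 and x, y ≥ 0. Then there exist α > d and t_0 > 0 such that for all t > t_0: E[ κ(t, W^{(1)}, W^{(2)}) ] ≤ t^{-α}, where W^{(1)}, W^{(2)} are i.i.d. copies of W. -/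
open MeasureTheory ProbabilityTheory Filter Topology
open scoped ENNReal NNReal

noncomputable section

variable {d : ℕ} {Ω : Type} [MeasurableSpace Ω]

section AuxStmt17
open Set

lemma aux_min_one_le_rpow {v θ : ℝ} (hv : 0 ≤ v) (hθ0 : 0 < θ) (hθ1 : θ ≤ 1) :
    min 1 v ≤ v ^ θ := by
  rcases hv.eq_or_lt with h | h
  · rw [← h, Real.zero_rpow hθ0.ne']
    simp
  rcases le_or_gt 1 v with h1 | h1
  · exact (min_le_left _ _).trans (Real.one_le_rpow h1 hθ0.le)
  · refine (min_le_right _ _).trans ?_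
    calc v = v ^ (1 : ℝ) := (Real.rpow_one v).symm
      _ ≤ v ^ θ := Real.rpow_le_rpow_of_exponent_ge h h1.le hθ1

lemma aux_pointwise {x y m t αG γ D : ℝ} (hx : 0 ≤ x) (hy : 0 ≤ y) (hm : 0 < m)
    (ht : 0 < t) (hαG : 0 < αG) (hγ0 : 0 < γ) (hγα : γ ≤ αG) :
    min 1 ((x * y / m) ^ αG * t ^ (-(D * αG))) ≤
      |x| ^ γ * |y| ^ γ * (m ^ (-γ) * t ^ (-(D * γ))) := by
  set s := t ^ (-D) with hs_def
  have hs : 0 < s := Real.rpow_pos_of_pos ht _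
  have hb : 0 ≤ x * y / m := by positivity
  have h1 : (x * y / m) ^ αG * t ^ (-(D * αG)) = ((x * y / m) * s) ^ αG := by
    rw [Real.mul_rpow hb hs.le, hs_def, ← Real.rpow_mul ht.le]
    ring_nf
  have h2 : t ^ (-(D * γ)) = s ^ γ := by
    rw [hs_def, ← Real.rpow_mul ht.le]; ring_nf
  rw [h1, h2]
  have h3 : min 1 (((x * y / m) * s) ^ αG) ≤ (((x * y / m) * s) ^ αG) ^ (γ / αG) :=
    aux_min_one_le_rpow (Real.rpow_nonneg (mul_nonneg hb hs.le) _)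
      (div_pos hγ0 hαG) ((div_le_one hαG).2 hγα)
  refine h3.trans_eq ?_
  rw [← Real.rpow_mul (mul_nonneg hb hs.le), mul_div_cancel₀ _ hαG.ne',
    Real.mul_rpow hb hs.le, Real.div_rpow (mul_nonneg hx hy) hm.le,
    Real.mul_rpow hx hy, Real.rpow_neg hm.le, abs_of_nonneg hx, abs_of_nonneg hy,
    div_eq_mul_inv]
  ring

lemma aux_integrable_abs_rpow (μ : Measure ℝ) [IsProbabilityMeasure μ]
    {βG CG tG γ : ℝ} (htG : 0 < tG) (hCG : 0 ≤ CG)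
    (h0 : μ (Set.Iio 0) = 0)
    (htail : ∀ z : ℝ, tG < z → μ (Set.Ioi z) ≤ ENNReal.ofReal (CG * z ^ (1 - βG)))
    (hγ1 : 1 < γ) (hγβ : γ < βG - 1) :
    Integrable (fun x : ℝ => |x| ^ γ) μ := by
  have hγ0 : 0 < γ := zero_lt_one.trans hγ1
  have hmeas : Measurable fun x : ℝ => |x| ^ γ :=
    ((Real.continuous_rpow_const hγ0.le).comp continuous_abs).measurable
  refine ⟨hmeas.aestronglyMeasurable, ?_⟩
  rw [hasFiniteIntegral_iff_ofReal (Filter.Eventually.of_forall fun x => by positivity)]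
  rw [MeasureTheory.lintegral_rpow_eq_lintegral_meas_lt_mul μ
    (Filter.Eventually.of_forall fun x => abs_nonneg x)
    (measurable_id.abs).aemeasurable hγ0]
  set T : ℝ := max tG 1 with hT_def
  have hT0 : (0 : ℝ) < T := lt_of_lt_of_le htG (le_max_left _ _)
  have hsplit : Ioc (0:ℝ) T ∪ Ioi T = Ioi 0 := Ioc_union_Ioi_eq_Ioi hT0.le
  rw [← hsplit, lintegral_union measurableSet_Ioi Ioc_disjoint_Ioi_same]
  refine ENNReal.mul_lt_top ENNReal.ofReal_lt_top (ENNReal.add_lt_top.2 ⟨?_, ?_⟩)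
  · -- piece on (0, T]
    calc ∫⁻ t in Ioc (0:ℝ) T, μ {a | t < |a|} * ENNReal.ofReal (t ^ (γ - 1))
        ≤ ∫⁻ _ in Ioc (0:ℝ) T, ENNReal.ofReal (T ^ (γ - 1)) := by
          refine setLIntegral_mono measurable_const fun t ht => ?_
          calc μ {a | t < |a|} * ENNReal.ofReal (t ^ (γ - 1))
              ≤ 1 * ENNReal.ofReal (T ^ (γ - 1)) :=
                mul_le_mul' prob_le_one
                  (ENNReal.ofReal_le_ofReal
                    (Real.rpow_le_rpow ht.1.le ht.2 (by linarith)))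
            _ = ENNReal.ofReal (T ^ (γ - 1)) := one_mul _
      _ = ENNReal.ofReal (T ^ (γ - 1)) * volume (Ioc (0:ℝ) T) := by
          rw [setLIntegral_const]
      _ < ⊤ := ENNReal.mul_lt_top ENNReal.ofReal_lt_top (by simp)
  · -- piece on (T, ∞)
    have hbound : ∫⁻ t in Ioi T, μ {a | t < |a|} * ENNReal.ofReal (t ^ (γ - 1))
        ≤ ∫⁻ t in Ioi T, ENNReal.ofReal (CG * t ^ (γ - βG)) := by
      refine setLIntegral_mono (by fun_prop) fun t ht => ?_
      have ht' : T < t := ht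
      have ht0 : (0 : ℝ) < t := hT0.trans ht'
      have htG' : tG < t := lt_of_le_of_lt (le_max_left _ _) ht'
      have hsub : {a : ℝ | t < |a|} ⊆ Set.Iio 0 ∪ Set.Ioi t := by
        intro a ha
        simp only [mem_setOf_eq] at ha
        rcases le_or_gt 0 a with h | h
        · exact Or.inr (by rwa [abs_of_nonneg h] at ha)
        · exact Or.inl h
      have hμt : μ {a : ℝ | t < |a|} ≤ ENNReal.ofReal (CG * t ^ (1 - βG)) := by
        calc μ {a : ℝ | t < |a|} ≤ μ (Set.Iio 0 ∪ Set.Ioi t) := measure_mono hsub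
          _ ≤ μ (Set.Iio 0) + μ (Set.Ioi t) := measure_union_le _ _
          _ = μ (Set.Ioi t) := by rw [h0, zero_add]
          _ ≤ ENNReal.ofReal (CG * t ^ (1 - βG)) := htail t htG'
      calc μ {a | t < |a|} * ENNReal.ofReal (t ^ (γ - 1))
          ≤ ENNReal.ofReal (CG * t ^ (1 - βG)) * ENNReal.ofReal (t ^ (γ - 1)) :=
            mul_le_mul' hμt le_rfl
        _ = ENNReal.ofReal (CG * t ^ (1 - βG) * t ^ (γ - 1)) :=
            (ENNReal.ofReal_mul (mul_nonneg hCG (Real.rpow_nonneg ht0.le _))).symm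
        _ = ENNReal.ofReal (CG * t ^ (γ - βG)) := by
            rw [mul_assoc, ← Real.rpow_add ht0]
            ring_nf
    have hInt : IntegrableOn (fun t : ℝ => CG * t ^ (γ - βG)) (Ioi T) :=
      (integrableOn_Ioi_rpow_of_lt (by linarith) hT0).const_mul CG
    refine lt_of_le_of_lt hbound ?_
    refine lt_of_le_of_lt (lintegral_ofReal_le_lintegral_enorm _) ?_
    exact hInt.2


end AuxStmt17

/-- Tail bound for the limiting GIRG connection function.
Let `d ≥ 1`, `α_G ∈ (1,∞)`, `β_G > 2`, and let `W` be a nonnegative random variable with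
law `μ`, finite positive mean, and power-law tail of exponent `β_G`:
`c_G z^{1-β_G} ≤ P(W > z) ≤ C_G z^{1-β_G}` for `z > t_G`. Then the limiting GIRG connection
function `κ(t,x,y) = min(1, (xy/E[W])^{α_G} t^{-dα_G})` satisfies the polynomial tail bound
`E[κ(t, W¹, W²)] ≤ t^{-α}` for all `t > t₀`, for some `α > d` and `t₀ > 0`, with `W¹, W²`
i.i.d. copies of `W`. -/

theorem stmt17 (d : ℕ) (hd : 1 ≤ d) (αG βG : ℝ) (hαG : 1 < αG) (hβG : 2 < βG)
    (μ : Measure ℝ) (hμ : IsProbabilityMeasure μ) (hnonneg : μ (Set.Iio (0 : ℝ)) = 0)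
    (hInt : Integrable (fun x : ℝ => x) μ) (hmean_pos : 0 < ∫ x : ℝ, x ∂μ)
    (cG CG tG : ℝ) (hcG : 0 < cG) (hcC : cG ≤ CG) (htG : 0 < tG)
    (htail : ∀ z : ℝ, tG < z →
      ENNReal.ofReal (cG * z ^ (1 - βG)) ≤ μ (Set.Ioi z) ∧
        μ (Set.Ioi z) ≤ ENNReal.ofReal (CG * z ^ (1 - βG))) :
    ∃ α t₀ : ℝ, (d : ℝ) < α ∧ 0 < t₀ ∧ ∀ t : ℝ, t₀ < t →
      ∫ p : ℝ × ℝ,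
          min 1 ((p.1 * p.2 / ∫ x : ℝ, x ∂μ) ^ αG * t ^ (-((d : ℝ) * αG)))
          ∂(μ.prod μ)
        ≤ t ^ (-α) := by
  set m := ∫ x : ℝ, x ∂μ with hm_def
  have hm : 0 < m := hmean_pos
  set D : ℝ := (d : ℝ) with hD_def
  have hD : 0 < D := by
    have : (1 : ℝ) ≤ (d : ℝ) := by exact_mod_cast hd
    linarith
  set Mn : ℝ := min αG (βG - 1) with hMn_def
  have hMn1 : 1 < Mn := lt_min hαG (by linarith)
  set γ : ℝ := (1 + Mn) / 2 with hγ_def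
  have hγ1 : 1 < γ := by rw [hγ_def]; linarith
  have hγ0 : 0 < γ := zero_lt_one.trans hγ1
  have hγMn : γ < Mn := by rw [hγ_def]; linarith
  have hγα : γ ≤ αG := (hγMn.trans_le (min_le_left _ _)).le
  have hγβ : γ < βG - 1 := hγMn.trans_le (min_le_right _ _)
  have hCG0 : (0 : ℝ) ≤ CG := (hcG.trans_le hcC).le
  have hIntγ : Integrable (fun x : ℝ => |x| ^ γ) μ :=
    aux_integrable_abs_rpow μ htG hCG0 hnonneg (fun z hz => (htail z hz).2) hγ1 hγβ
  set B : ℝ := ∫ x : ℝ, |x| ^ γ ∂μ with hB_def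
  have hB0 : 0 ≤ B := integral_nonneg fun x => Real.rpow_nonneg (abs_nonneg x) _
  set A : ℝ := B * B * m ^ (-γ) with hA_def
  have hA0 : 0 ≤ A := by
    have := Real.rpow_nonneg hm.le (-γ)
    positivity
  set α : ℝ := (D + D * γ) / 2 with hα_def
  have hεpos : 0 < D * γ - α := by rw [hα_def]; nlinarith
  set t₀ : ℝ := max 1 ((A + 1) ^ (D * γ - α)⁻¹) with ht₀_def
  have ht₀pos : 0 < t₀ := lt_of_lt_of_le one_pos (le_max_left _ _)
  refine ⟨α, t₀, ?_, ht₀pos, fun t ht => ?_⟩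
  · rw [hα_def]; nlinarith
  have ht1 : 1 < t := lt_of_le_of_lt (le_max_left _ _) ht
  have ht0 : 0 < t := zero_lt_one.trans ht1
  -- a.e. nonnegativity of both coordinates
  have hnull1 : (μ.prod μ) {p : ℝ × ℝ | p.1 < 0} = 0 := by
    have hs : {p : ℝ × ℝ | p.1 < 0} = (Set.Iio 0) ×ˢ (Set.univ : Set ℝ) := by
      ext p; simp [Set.mem_prod]
    rw [hs, Measure.prod_prod, hnonneg, zero_mul]
  have hnull2 : (μ.prod μ) {p : ℝ × ℝ | p.2 < 0} = 0 := by
    have hs : {p : ℝ × ℝ | p.2 < 0} = (Set.univ : Set ℝ) ×ˢ (Set.Iio 0) := by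
      ext p; simp [Set.mem_prod]
    rw [hs, Measure.prod_prod, hnonneg, mul_zero]
  have hae : ∀ᵐ p : ℝ × ℝ ∂μ.prod μ, 0 ≤ p.1 ∧ 0 ≤ p.2 := by
    have h1 : ∀ᵐ p : ℝ × ℝ ∂μ.prod μ, 0 ≤ p.1 := by
      rw [ae_iff]; simpa [not_le] using hnull1
    have h2 : ∀ᵐ p : ℝ × ℝ ∂μ.prod μ, 0 ≤ p.2 := by
      rw [ae_iff]; simpa [not_le] using hnull2
    exact h1.and h2
  -- integrability of the integrand
  have hαG0 : (0 : ℝ) < αG := zero_lt_one.trans hαG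
  have hcont : Continuous fun p : ℝ × ℝ =>
      min 1 ((p.1 * p.2 / m) ^ αG * t ^ (-(D * αG))) := by
    refine continuous_const.min ?_
    exact (((continuous_fst.mul continuous_snd).div_const m).rpow_const
      (fun p => Or.inr hαG0.le)).mul continuous_const
  have hf_int : Integrable
      (fun p : ℝ × ℝ => min 1 ((p.1 * p.2 / m) ^ αG * t ^ (-(D * αG)))) (μ.prod μ) := by
    refine Integrable.mono' (integrable_const (1 : ℝ)) hcont.aestronglyMeasurable ?_
    filter_upwards [hae] with p hp
    have hv : 0 ≤ (p.1 * p.2 / m) ^ αG * t ^ (-(D * αG)) :=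
      mul_nonneg (Real.rpow_nonneg (div_nonneg (mul_nonneg hp.1 hp.2) hm.le) _)
        (Real.rpow_nonneg ht0.le _)
    rw [Real.norm_eq_abs, abs_of_nonneg (le_min zero_le_one hv)]
    exact min_le_left _ _
  have hg_int : Integrable
      (fun p : ℝ × ℝ => |p.1| ^ γ * |p.2| ^ γ * (m ^ (-γ) * t ^ (-(D * γ)))) (μ.prod μ) :=
    (hIntγ.mul_prod hIntγ).mul_const _
  have hmono : ∫ p : ℝ × ℝ, min 1 ((p.1 * p.2 / m) ^ αG * t ^ (-(D * αG))) ∂(μ.prod μ)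
      ≤ ∫ p : ℝ × ℝ, |p.1| ^ γ * |p.2| ^ γ * (m ^ (-γ) * t ^ (-(D * γ))) ∂(μ.prod μ) := by
    refine integral_mono_ae hf_int hg_int ?_
    filter_upwards [hae] with p hp
    exact aux_pointwise hp.1 hp.2 hm ht0 hαG0 hγ0 hγα
  have hval : ∫ p : ℝ × ℝ, |p.1| ^ γ * |p.2| ^ γ * (m ^ (-γ) * t ^ (-(D * γ))) ∂(μ.prod μ)
      = A * t ^ (-(D * γ)) := by
    rw [integral_mul_const, integral_prod_mul (f := fun x : ℝ => |x| ^ γ)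
      (g := fun x : ℝ => |x| ^ γ), ← hB_def]
    rw [hA_def]; ring
  have hA_le : A ≤ t ^ (D * γ - α) := by
    have h2 : A + 1 = ((A + 1) ^ (D * γ - α)⁻¹) ^ (D * γ - α) := by
      rw [← Real.rpow_mul (by linarith), inv_mul_cancel₀ hεpos.ne', Real.rpow_one]
    have h3 : ((A + 1) ^ (D * γ - α)⁻¹) ^ (D * γ - α) ≤ t ^ (D * γ - α) :=
      Real.rpow_le_rpow (Real.rpow_nonneg (by linarith) _)
        ((le_max_right _ _).trans ht.le) hεpos.le
    linarith [h2 ▸ h3]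
  calc ∫ p : ℝ × ℝ, min 1 ((p.1 * p.2 / m) ^ αG * t ^ (-(D * αG))) ∂(μ.prod μ)
      ≤ A * t ^ (-(D * γ)) := hval ▸ hmono
    _ ≤ t ^ (D * γ - α) * t ^ (-(D * γ)) :=
        mul_le_mul_of_nonneg_right hA_le (Real.rpow_nonneg ht0.le _)
    _ = t ^ (-α) := by rw [← Real.rpow_add ht0]; ring_nf
  

end
end
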